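/- Let e, f, a be rational numbers with e ≠ 0 and f ≠ 0, and let l_e, l, l_f ∈ ℚ² be vectors satisfying the relation f²·l_e + a·l + e²·l_f = 0 together with det(l_e, l) = e² and det(l, l_f) = f², where det(u, v) := u₁v₂ − u₂v₁. Set w_e := (1/e)·(l − l_e), w_f := (1/f)·(l_f − l), and l' := l_f + ((a + f²)/e)·w_e. Then l' = l_e + f·(det(w_e, w_f)·w_e + w_f), and ((a + f²)/e)²·l_e + a·l' + f²·l_f = 0. -/
import Mathlib


/-- The determinant of two vectors in ℚ². -/
def det2 (u v : ℚ × ℚ) : ℚ := u.1 * v.2 - u.2 * v.1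

/-- For nonzero rationals e, f and vectors l_e, l, l_f ∈ ℚ² satisfying
f²·l_e + a·l + e²·l_f = 0, det(l_e, l) = e², det(l, l_f) = f², with w_e = (1/e)(l − l_e),
w_f = (1/f)(l_f − l) and l' = l_f + ((a + f²)/e)·w_e, one has
l' = l_e + f·(det(w_e, w_f)·w_e + w_f) and ((a + f²)/e)²·l_e + a·l' + f²·l_f = 0. -/
theorem stmt_17 (e f a : ℚ) (he : e ≠ 0) (hf : f ≠ 0)
    (le l lf : ℚ × ℚ)
    (hrel : (f ^ 2) • le + a • l + (e ^ 2) • lf = 0)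
    (h1 : det2 le l = e ^ 2) (h2 : det2 l lf = f ^ 2)
    (we wf l' : ℚ × ℚ)
    (hwe : we = (1 / e) • (l - le)) (hwf : wf = (1 / f) • (lf - l))
    (hl' : l' = lf + ((a + f ^ 2) / e) • we) :
    l' = le + f • (det2 we wf • we + wf) ∧
    ((a + f ^ 2) / e) ^ 2 • le + a • l' + (f ^ 2) • lf = 0 := by
  obtain ⟨le1, le2⟩ := le
  obtain ⟨l1, l2⟩ := l
  obtain ⟨lf1, lf2⟩ := lf
  obtain ⟨we1, we2⟩ := we
  obtain ⟨wf1, wf2⟩ := wf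
  obtain ⟨lp1, lp2⟩ := l'
  simp only [det2, Prod.ext_iff, Prod.smul_mk, Prod.mk_add_mk, Prod.fst_add, Prod.snd_add,
    Prod.smul_fst, Prod.smul_snd, Prod.fst_zero, Prod.snd_zero, smul_eq_mul,
    Prod.mk_sub_mk] at hrel h1 h2 hwe hwf hl' ⊢
  obtain ⟨hr1, hr2⟩ := hrel
  obtain ⟨hwe1, hwe2⟩ := hwe
  obtain ⟨hwf1, hwf2⟩ := hwf
  obtain ⟨hl1, hl2⟩ := hl'
  -- polynomial versions of the division hypotheses
  have hwe1' : e * we1 = l1 - le1 := by rw [hwe1]; field_simp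
  have hwe2' : e * we2 = l2 - le2 := by rw [hwe2]; field_simp
  have hwf1' : f * wf1 = lf1 - l1 := by rw [hwf1]; field_simp
  have hwf2' : f * wf2 = lf2 - l2 := by rw [hwf2]; field_simp
  set g : ℚ := (a + f ^ 2) / e with hgdef
  have hg : e * g = a + f ^ 2 := by rw [hgdef]; field_simp
  -- det(le, lf) = -a
  have hD : le1 * lf2 - le2 * lf1 = -a := by
    have key : e ^ 2 * (le1 * lf2 - le2 * lf1 + a) = 0 := by
      linear_combination le1 * hr2 - le2 * hr1 - a * h1
    rcases mul_eq_zero.mp key with h | h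
    · exact absurd h (pow_ne_zero 2 he)
    · linarith
  -- e f det(we,wf) = e^2 + f^2 + a
  have hd : e * f * (we1 * wf2 - we2 * wf1) = e ^ 2 + f ^ 2 + a := by
    linear_combination (f * wf2) * hwe1' + (l1 - le1) * hwf2' - (f * wf1) * hwe2'
      - (l2 - le2) * hwf1' + h1 + h2 - hD
  refine ⟨⟨?_, ?_⟩, ?_, ?_⟩
  · apply mul_left_cancel₀ he
    linear_combination e * hl1 + we1 * hg - we1 * hd - e * hwf1' - e * hwe1'
  · apply mul_left_cancel₀ he
    linear_combination e * hl2 + we2 * hg - we2 * hd - e * hwf2' - e * hwe2'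
  · apply mul_left_cancel₀ (pow_ne_zero 2 he)
    linear_combination (e * g + (a + f ^ 2)) * le1 * hg + a * e ^ 2 * hl1
      + a * e * we1 * hg + a * (a + f ^ 2) * hwe1' + (a + f ^ 2) * hr1
  · apply mul_left_cancel₀ (pow_ne_zero 2 he)
    linear_combination (e * g + (a + f ^ 2)) * le2 * hg + a * e ^ 2 * hl2
      + a * e * we2 * hg + a * (a + f ^ 2) * hwe2' + (a + f ^ 2) * hr2
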